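/- For any positive integers j, k ≥ 1 there exists c = c(k,j) > 0 such that for every Schwartz function f on ℝ, ‖⟨x⟩^k ∂_x^j f‖_{L²}² ≤ c ‖⟨x⟩^{k−1} ∂_x^{j+1} f‖_{L²} · ‖⟨x⟩^{k+1} ∂_x^{j−1} f‖_{L²} + c ‖⟨x⟩^{k−1} ∂_x^{j−1} f‖_{L²}². -/

import Mathlib

/-!
With `g = ∂^{j-1} f` and `w = (1 + x²)^k = ⟨x⟩^{2k}`, integration by parts gives
`∫ w |g'|² = -Re ∫ (w' g' + w g'') ḡ`. Since `|w'| ≤ 2k ⟨x⟩^k ⟨x⟩^{k-1}` and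
`w ≤ ⟨x⟩^{k-1} ⟨x⟩^{k+1}`, Cauchy–Schwarz yields `X² ≤ 2k X Y + A B` for
`X = ‖⟨x⟩^k g'‖₂`, `Y = ‖⟨x⟩^{k-1} g‖₂`, `A = ‖⟨x⟩^{k-1} g''‖₂`, `B = ‖⟨x⟩^{k+1} g‖₂`.
As `X < ∞`, absorbing `2k X Y ≤ X²/2 + 2k² Y²` gives the claim with `c = 4k² + 2`.
-/

open MeasureTheory
open scoped ENNReal NNReal SchwartzMap InnerProductSpace

theorem MeasureTheory.MemLp.sq_eLpNorm_two_eq {α E : Type*} [MeasurableSpace α] {μ : Measure α}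
    [NormedAddCommGroup E] {f : α → E} (hf : MemLp f 2 μ) :
    eLpNorm f 2 μ ^ 2 = ENNReal.ofReal (∫ x, ‖f x‖ ^ 2 ∂μ) := by
  have hsq : eLpNorm f 2 μ ^ 2 = ∫⁻ x, ‖f x‖ₑ ^ 2 ∂μ := by
    simpa using eLpNorm_nnreal_pow_eq_lintegral (f := f) (μ := μ) (p := 2) two_ne_zero
  rw [hsq, ofReal_integral_eq_lintegral_ofReal ((memLp_two_iff_integrable_sq_norm hf.1).mp hf)
    (ae_of_all _ fun _ => by positivity)]
  simp only [ENNReal.ofReal_pow (norm_nonneg _), ofReal_norm]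

theorem MeasureTheory.lintegral_enorm_mul_le_eLpNorm_two_mul {α E F : Type*} [MeasurableSpace α]
    {μ : Measure α} [NormedAddCommGroup E] [NormedAddCommGroup F] {u : α → E} {v : α → F}
    (hu : AEStronglyMeasurable u μ) (hv : AEStronglyMeasurable v μ) :
    ∫⁻ x, ‖u x‖ₑ * ‖v x‖ₑ ∂μ ≤ eLpNorm u 2 μ * eLpNorm v 2 μ := by
  have := eLpNorm_le_eLpNorm_mul_eLpNorm'_of_norm (p := 2) (q := 2) (r := 1) hu hv
    (fun a b => ‖a‖ * ‖b‖) 1 (by simp)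
  simpa [eLpNorm_one_eq_lintegral_enorm, enorm_mul] using this

theorem ENNReal.sq_le_sq_add_two_mul_of_sq_le_mul_add {X b Z : ℝ≥0∞} (hX : X ≠ ⊤)
    (h : X ^ 2 ≤ X * b + Z) : X ^ 2 ≤ b ^ 2 + 2 * Z := by
  rcases eq_or_ne b ⊤ with rfl | hb
  · simp
  rcases eq_or_ne Z ⊤ with rfl | hZ
  · simp
  lift X to ℝ≥0 using hX
  lift b to ℝ≥0 using hb
  lift Z to ℝ≥0 using hZ
  norm_cast at h ⊢
  rw [← NNReal.coe_le_coe] at h ⊢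
  push_cast at h ⊢
  nlinarith [sq_nonneg ((X : ℝ) - b)]

/-- `⟨x⟩ ^ m h(x)`, where `⟨x⟩ = √(1 + x²)`. -/
noncomputable def bracketPowMul (m : ℕ) (h : ℝ → ℂ) (x : ℝ) : ℂ :=
  (Real.sqrt (1 + x ^ 2) ^ m : ℝ) * h x

theorem norm_bracketPowMul (m : ℕ) (h : ℝ → ℂ) (x : ℝ) :
    ‖bracketPowMul m h x‖ = Real.sqrt (1 + x ^ 2) ^ m * ‖h x‖ := by
  rw [bracketPowMul, norm_mul, Complex.norm_real, Real.norm_of_nonneg (by positivity)]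

theorem hasTemperateGrowth_sqrt_one_add_sq_pow (m : ℕ) :
    Function.HasTemperateGrowth (fun x : ℝ => Real.sqrt (1 + x ^ 2) ^ m) := by
  have h : (fun x : ℝ => Real.sqrt (1 + x ^ 2) ^ m)
      = (fun x : ℝ => (1 + ‖x‖ ^ 2) ^ (1 / 2 : ℝ)) ^ m := by
    funext x
    simp [Real.sqrt_eq_rpow]
  rw [h]
  exact (Function.hasTemperateGrowth_one_add_norm_sq_rpow ℝ _).pow m

theorem abs_deriv_one_add_sq_pow_le_sqrt_pow_mul (k : ℕ) (x : ℝ) :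
    |k * (1 + x ^ 2) ^ (k - 1) * (2 * x)|
      ≤ 2 * k * (Real.sqrt (1 + x ^ 2) ^ k * Real.sqrt (1 + x ^ 2) ^ (k - 1)) := by
  set s := Real.sqrt (1 + x ^ 2)
  have hs : s ^ 2 = 1 + x ^ 2 := Real.sq_sqrt (by positivity)
  have hx : |x| ≤ s := Real.abs_le_sqrt (by linarith)
  rcases k with _ | k
  · simp
  have hpow : (1 + x ^ 2) ^ k = s ^ k * s ^ k := by rw [← hs, ← pow_mul, ← pow_add, two_mul]
  rw [Nat.add_sub_cancel, abs_mul, abs_mul, abs_mul, abs_two, Nat.abs_cast, hpow,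
    abs_of_nonneg (by positivity)]
  calc ((k + 1 : ℕ) : ℝ) * (s ^ k * s ^ k) * (2 * |x|)
      = 2 * (k + 1 : ℕ) * (s ^ k * |x| * s ^ k) := by ring
    _ ≤ 2 * (k + 1 : ℕ) * (s ^ k * s * s ^ k) := by gcongr
    _ = 2 * (k + 1 : ℕ) * (s ^ (k + 1) * s ^ k) := by ring

theorem one_add_sq_pow_le_sqrt_pow_mul (k : ℕ) (x : ℝ) :
    (1 + x ^ 2) ^ k ≤ Real.sqrt (1 + x ^ 2) ^ (k - 1) * Real.sqrt (1 + x ^ 2) ^ (k + 1) := by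
  set s := Real.sqrt (1 + x ^ 2)
  have hs : s ^ 2 = 1 + x ^ 2 := Real.sq_sqrt (by positivity)
  have hs1 : 1 ≤ s := Real.one_le_sqrt.mpr (by nlinarith [sq_nonneg x])
  rw [← pow_add, ← hs, ← pow_mul]
  exact pow_le_pow_right₀ hs1 (by omega)

theorem norm_inner_deriv_weight_le (k : ℕ) (g g₁ g₂ : ℝ → ℂ) (x : ℝ) :
    ‖⟪(k * (1 + x ^ 2) ^ (k - 1) * (2 * x)) • g₁ x + (1 + x ^ 2) ^ k • g₂ x, g x⟫_ℝ‖
      ≤ 2 * k * (‖bracketPowMul k g₁ x‖ * ‖bracketPowMul (k - 1) g x‖)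
        + ‖bracketPowMul (k - 1) g₂ x‖ * ‖bracketPowMul (k + 1) g x‖ := by
  simp only [norm_bracketPowMul]
  calc _ ≤ ‖(k * (1 + x ^ 2) ^ (k - 1) * (2 * x)) • g₁ x + (1 + x ^ 2) ^ k • g₂ x‖ * ‖g x‖ :=
        norm_inner_le_norm _ _
    _ ≤ (|k * (1 + x ^ 2) ^ (k - 1) * (2 * x)| * ‖g₁ x‖ + (1 + x ^ 2) ^ k * ‖g₂ x‖) * ‖g x‖ := by
        gcongr
        refine (norm_add_le _ _).trans_eq ?_
        rw [norm_smul, norm_smul, Real.norm_eq_abs, Real.norm_of_nonneg (by positivity)]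
    _ ≤ (2 * k * (Real.sqrt (1 + x ^ 2) ^ k * Real.sqrt (1 + x ^ 2) ^ (k - 1)) * ‖g₁ x‖
          + Real.sqrt (1 + x ^ 2) ^ (k - 1) * Real.sqrt (1 + x ^ 2) ^ (k + 1) * ‖g₂ x‖)
          * ‖g x‖ := by
        gcongr
        · exact abs_deriv_one_add_sq_pow_le_sqrt_pow_mul k x
        · exact one_add_sq_pow_le_sqrt_pow_mul k x
    _ = _ := by ring

theorem enorm_inner_deriv_weight_le (k : ℕ) (g g₁ g₂ : ℝ → ℂ) (x : ℝ) :
    ‖⟪(k * (1 + x ^ 2) ^ (k - 1) * (2 * x)) • g₁ x + (1 + x ^ 2) ^ k • g₂ x, g x⟫_ℝ‖ₑ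
      ≤ 2 * k * (‖bracketPowMul k g₁ x‖ₑ * ‖bracketPowMul (k - 1) g x‖ₑ)
        + ‖bracketPowMul (k - 1) g₂ x‖ₑ * ‖bracketPowMul (k + 1) g x‖ₑ := by
  simp only [enorm_eq_nnnorm]
  norm_cast
  rw [← NNReal.coe_le_coe]
  push_cast
  exact norm_inner_deriv_weight_le k g g₁ g₂ x

namespace SchwartzMap

theorem coe_derivCLM_iterate {F : Type*} [NormedAddCommGroup F] [NormedSpace ℝ F]
    (f : 𝓢(ℝ, F)) (n : ℕ) : ⇑((derivCLM ℝ F)^[n] f) = iteratedDeriv n f := by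
  induction n with
  | zero => simp
  | succ n ih =>
    funext x
    rw [Function.iterate_succ_apply', derivCLM_apply, ih, iteratedDeriv_succ]

theorem memLp_bracketPowMul (g : 𝓢(ℝ, ℂ)) (m : ℕ) (p : ℝ≥0∞) :
    MemLp (bracketPowMul m g) p volume := by
  have h := (smulLeftCLM ℂ (fun x : ℝ => Real.sqrt (1 + x ^ 2) ^ m) g).memLp p
  rwa [smulLeftCLM_apply (hasTemperateGrowth_sqrt_one_add_sq_pow m)] at h

theorem integral_norm_bracketPowMul_deriv_sq (k : ℕ) (g : 𝓢(ℝ, ℂ)) :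
    ∫ x, ‖bracketPowMul k (deriv g) x‖ ^ 2 =
      -∫ x : ℝ, ⟪(k * (1 + x ^ 2) ^ (k - 1) * (2 * x)) • deriv g x
          + (1 + x ^ 2) ^ k • deriv (deriv g) x, g x⟫_ℝ := by
  set g₁ := derivCLM ℝ ℂ g
  set W := smulLeftCLM ℂ (fun x : ℝ => (1 + x ^ 2) ^ k) g₁
  have hW : ∀ x, W x = (1 + x ^ 2) ^ k • g₁ x := smulLeftCLM_apply_apply (by fun_prop) g₁
  have hW' : ∀ x, deriv W x =
      (k * (1 + x ^ 2) ^ (k - 1) * (2 * x)) • g₁ x + (1 + x ^ 2) ^ k • deriv g₁ x := by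
    intro x
    have hw : HasDerivAt (fun x : ℝ => (1 + x ^ 2) ^ k)
        (k * (1 + x ^ 2) ^ (k - 1) * (2 * x)) x := by
      simpa using ((hasDerivAt_pow 2 x).const_add 1).fun_pow k
    rw [show ⇑W = fun x => (1 + x ^ 2) ^ k • g₁ x from funext hW]
    exact (hw.fun_smul (g₁.hasDerivAt x)).deriv.trans (add_comm _ _)
  have hnorm : ∀ x, ‖bracketPowMul k g₁ x‖ ^ 2 = ⟪W x, g₁ x⟫_ℝ := by
    intro x
    rw [hW, real_inner_smul_left, real_inner_self_eq_norm_sq, norm_bracketPowMul, mul_pow,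
      ← pow_mul, mul_comm k, pow_mul, Real.sq_sqrt (by positivity)]
  change ∫ x, ‖bracketPowMul k g₁ x‖ ^ 2 =
    -∫ x : ℝ, ⟪(k * (1 + x ^ 2) ^ (k - 1) * (2 * x)) • g₁ x + (1 + x ^ 2) ^ k • deriv g₁ x, g x⟫_ℝ
  simp_rw [hnorm, ← hW']
  exact integral_bilinear_deriv_right_eq_neg_left W g (innerSL ℝ)

theorem sq_eLpNorm_bracketPowMul_deriv_le (k : ℕ) (g : 𝓢(ℝ, ℂ)) :
    eLpNorm (bracketPowMul k (deriv g)) 2 volume ^ 2 ≤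
      eLpNorm (bracketPowMul k (deriv g)) 2 volume
          * (2 * k * eLpNorm (bracketPowMul (k - 1) g) 2 volume)
        + eLpNorm (bracketPowMul (k - 1) (deriv (deriv g))) 2 volume
          * eLpNorm (bracketPowMul (k + 1) g) 2 volume := by
  have hmeas : ∀ (m : ℕ) (h : 𝓢(ℝ, ℂ)), AEStronglyMeasurable (bracketPowMul m h) volume :=
    fun m h => (h.memLp_bracketPowMul m 2).aestronglyMeasurable
  have hmeas₂ : ∀ (m n : ℕ) (h h' : 𝓢(ℝ, ℂ)),
      AEMeasurable (fun x => ‖bracketPowMul m h x‖ₑ * ‖bracketPowMul n h' x‖ₑ) volume :=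
    fun m n h h' => (hmeas m h).enorm.mul (hmeas n h').enorm
  set g₁ := derivCLM ℝ ℂ g
  set g₂ := derivCLM ℝ ℂ g₁
  change _ ≤ eLpNorm (bracketPowMul k g₁) 2 volume * _
    + eLpNorm (bracketPowMul (k - 1) g₂) 2 volume * _
  set I := ∫ x : ℝ, ⟪(k * (1 + x ^ 2) ^ (k - 1) * (2 * x)) • g₁ x + (1 + x ^ 2) ^ k • g₂ x, g x⟫_ℝ
  calc eLpNorm (bracketPowMul k g₁) 2 volume ^ 2 = ENNReal.ofReal (-I) := by
        rw [(g₁.memLp_bracketPowMul k 2).sq_eLpNorm_two_eq]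
        exact congrArg _ (integral_norm_bracketPowMul_deriv_sq k g)
    _ ≤ ‖I‖ₑ := by
        rw [Real.enorm_eq_ofReal_abs]
        exact ENNReal.ofReal_le_ofReal (neg_le_abs _)
    _ ≤ ∫⁻ x : ℝ, ‖⟪(k * (1 + x ^ 2) ^ (k - 1) * (2 * x)) • g₁ x + (1 + x ^ 2) ^ k • g₂ x,
          g x⟫_ℝ‖ₑ := enorm_integral_le_lintegral_enorm _
    _ ≤ ∫⁻ x, 2 * k * (‖bracketPowMul k g₁ x‖ₑ * ‖bracketPowMul (k - 1) g x‖ₑ)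
          + ‖bracketPowMul (k - 1) g₂ x‖ₑ * ‖bracketPowMul (k + 1) g x‖ₑ :=
        lintegral_mono fun x => enorm_inner_deriv_weight_le k g g₁ g₂ x
    _ = 2 * k * (∫⁻ x, ‖bracketPowMul k g₁ x‖ₑ * ‖bracketPowMul (k - 1) g x‖ₑ)
          + ∫⁻ x, ‖bracketPowMul (k - 1) g₂ x‖ₑ * ‖bracketPowMul (k + 1) g x‖ₑ := by
        rw [lintegral_add_left' ((hmeas₂ _ _ _ _).const_mul _),
          lintegral_const_mul'' _ (hmeas₂ _ _ _ _)]
    _ ≤ 2 * k * (eLpNorm (bracketPowMul k g₁) 2 volume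
            * eLpNorm (bracketPowMul (k - 1) g) 2 volume)
          + eLpNorm (bracketPowMul (k - 1) g₂) 2 volume
            * eLpNorm (bracketPowMul (k + 1) g) 2 volume := by
        gcongr <;> exact lintegral_enorm_mul_le_eLpNorm_two_mul (hmeas _ _) (hmeas _ _)
    _ = _ := by ring

end SchwartzMap

theorem weighted_interpolation_deriv_asymmetric_general (j k : ℕ) (hj : 1 ≤ j) :
    ∃ c : ℝ, 0 < c ∧ ∀ f : SchwartzMap ℝ ℂ,
      (eLpNorm (fun x => (Real.sqrt (1 + x ^ 2) ^ k : ℝ) * iteratedDeriv j (⇑f) x)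
          2 volume) ^ 2 ≤
        ENNReal.ofReal c *
          (eLpNorm (fun x => (Real.sqrt (1 + x ^ 2) ^ (k - 1) : ℝ) *
            iteratedDeriv (j + 1) (⇑f) x) 2 volume) *
          (eLpNorm (fun x => (Real.sqrt (1 + x ^ 2) ^ (k + 1) : ℝ) *
            iteratedDeriv (j - 1) (⇑f) x) 2 volume) +
        ENNReal.ofReal c *
          (eLpNorm (fun x => (Real.sqrt (1 + x ^ 2) ^ (k - 1) : ℝ) *
            iteratedDeriv (j - 1) (⇑f) x) 2 volume) ^ 2 := by
  obtain ⟨m, rfl⟩ : ∃ m, j = m + 1 := ⟨j - 1, by omega⟩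
  refine ⟨4 * k ^ 2 + 2, by positivity, fun f => ?_⟩
  set g := (SchwartzMap.derivCLM ℝ ℂ)^[m] f
  simp only [Nat.add_sub_cancel, iteratedDeriv_succ, ← SchwartzMap.coe_derivCLM_iterate f m]
  have hc : ENNReal.ofReal (4 * k ^ 2 + 2) = (2 * k) ^ 2 + 2 := by
    rw [show (4 * k ^ 2 + 2 : ℝ) = ((4 * k ^ 2 + 2 : ℕ) : ℝ) by push_cast; ring,
      ENNReal.ofReal_natCast]
    push_cast
    ring
  calc _ ≤ (2 * k * eLpNorm (bracketPowMul (k - 1) g) 2 volume) ^ 2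
          + 2 * (eLpNorm (bracketPowMul (k - 1) (deriv (deriv g))) 2 volume
            * eLpNorm (bracketPowMul (k + 1) g) 2 volume) :=
        ENNReal.sq_le_sq_add_two_mul_of_sq_le_mul_add
          ((SchwartzMap.derivCLM ℝ ℂ g).memLp_bracketPowMul k 2).eLpNorm_ne_top
          (g.sq_eLpNorm_bracketPowMul_deriv_le k)
    _ ≤ ((2 * k) ^ 2 + 2) * eLpNorm (bracketPowMul (k - 1) (deriv (deriv g))) 2 volume
            * eLpNorm (bracketPowMul (k + 1) g) 2 volume
          + ((2 * k) ^ 2 + 2) * eLpNorm (bracketPowMul (k - 1) g) 2 volume ^ 2 := by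
        rw [mul_pow, add_comm, mul_assoc]
        gcongr
        exacts [le_add_self, le_self_add]
    _ = _ := by rw [hc]; rfl

/-- Asymmetric weighted Gagliardo–Nirenberg inequality:
`‖⟨x⟩^k ∂^j f‖₂² ≤ c ‖⟨x⟩^{k-1} ∂^{j+1} f‖₂ ‖⟨x⟩^{k+1} ∂^{j-1} f‖₂ + c ‖⟨x⟩^{k-1} ∂^{j-1} f‖₂²`. -/
theorem weighted_interpolation_deriv_asymmetric (j k : ℕ) (hj : 1 ≤ j) (hk : 1 ≤ k) :
    ∃ c : ℝ, 0 < c ∧ ∀ f : SchwartzMap ℝ ℂ,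
      (eLpNorm (fun x => (Real.sqrt (1 + x ^ 2) ^ k : ℝ) * iteratedDeriv j (⇑f) x)
          2 volume) ^ 2 ≤
        ENNReal.ofReal c *
          (eLpNorm (fun x => (Real.sqrt (1 + x ^ 2) ^ (k - 1) : ℝ) *
            iteratedDeriv (j + 1) (⇑f) x) 2 volume) *
          (eLpNorm (fun x => (Real.sqrt (1 + x ^ 2) ^ (k + 1) : ℝ) *
            iteratedDeriv (j - 1) (⇑f) x) 2 volume) +
        ENNReal.ofReal c *
          (eLpNorm (fun x => (Real.sqrt (1 + x ^ 2) ^ (k - 1) : ℝ) *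
            iteratedDeriv (j - 1) (⇑f) x) 2 volume) ^ 2 :=
  weighted_interpolation_deriv_asymmetric_general j k hj
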